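/- arXiv:1407.8151 — 2 statements merged into one kernel-verified Lean document; each statement's English description precedes it below -/
import Mathlib

section
/- Let Θ be a finite set with at least two elements, m a mass function on Θ with belief function b, and x ∈ Θ. Among all mass functions m' on Θ focused on x, with belief function b', the squared L2 distance ∑_{∅ ⊊ A ⊊ Θ} (b(A) − b'(A))² attains its minimum, the minimal value is ∑_{∅ ⊊ A ⊆ Θ \ {x}} b(A)², and the minimum is attained uniquely by the focused consistent transformation m* defined by m*(A) = m(A) + m(A \ {x}) for every A with x ∈ A, and m*(A) = 0 for every nonempty A with x ∉ A; in particular the partial L1 and L2 consistent approximations in the belief space coincide. -/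
set_option linter.unusedSectionVars false

open Finset

variable {Θ : Type*}

/-- A mass function (basic probability assignment) on a finite frame `Θ`:
`m ∅ = 0`, nonnegative, and total mass one. -/
def IsMass [Fintype Θ] (m : Finset Θ → ℝ) : Prop :=
  m ∅ = 0 ∧ (∀ A, 0 ≤ m A) ∧ ∑ A : Finset Θ, m A = 1

/-- The belief function of a mass function: `b(A) = ∑_{B ⊆ A} m(B)`. -/
def bel (m : Finset Θ → ℝ) (A : Finset Θ) : ℝ := ∑ B ∈ A.powerset, m B

/-- Singleton plausibility: `pl(x) = ∑_{B ∋ x} m(B)`. -/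
def pl [Fintype Θ] [DecidableEq Θ] (m : Finset Θ → ℝ) (x : Θ) : ℝ :=
  ∑ B ∈ Finset.univ.filter (fun B => x ∈ B), m B

/-- The core of a mass function: the intersection of all its focal elements. -/
def core (m : Finset Θ → ℝ) : Set Θ := ⋂ A ∈ {A : Finset Θ | m A ≠ 0}, (A : Set Θ)

/-- A mass function is consistent if its core is nonempty. -/
def Consistent (m : Finset Θ → ℝ) : Prop := (core m).Nonempty

/-- A mass function is focused on `x` if every focal element contains `x`. -/
def Focused (m : Finset Θ → ℝ) (x : Θ) : Prop := ∀ A, m A ≠ 0 → x ∈ A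

section
variable [Fintype Θ] [DecidableEq Θ]

lemma bel_zero_of_focused {m : Finset Θ → ℝ} {x : Θ} (hf : Focused m x)
    {A : Finset Θ} (hx : x ∉ A) : bel m A = 0 := by
  apply Finset.sum_eq_zero
  intro B hB
  by_contra h
  exact hx (Finset.mem_powerset.mp hB (hf B h))

lemma bel_univ' (m : Finset Θ → ℝ) : bel m Finset.univ = ∑ A : Finset Θ, m A := by
  unfold bel; rw [Finset.powerset_univ]

lemma mass_ext' {m1 m2 : Finset Θ → ℝ} (h : ∀ A, bel m1 A = bel m2 A) : m1 = m2 := by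
  funext A
  induction A using Finset.strongInduction with
  | _ A ih =>
    have h1 := h A
    unfold bel at h1
    rw [← Finset.add_sum_erase _ _ (Finset.mem_powerset_self A),
        ← Finset.add_sum_erase _ _ (Finset.mem_powerset_self A)] at h1
    have h2 : ∑ B ∈ (A.powerset).erase A, m1 B = ∑ B ∈ (A.powerset).erase A, m2 B := by
      apply Finset.sum_congr rfl
      intro B hB
      obtain ⟨hne, hsub⟩ := Finset.mem_erase.mp hB
      exact ih B (Finset.ssubset_iff_subset_ne.mpr ⟨Finset.mem_powerset.mp hsub, hne⟩)
    linarith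

lemma bel_mstar_eq {m mstar : Finset Θ → ℝ} {x : Θ}
    (hstar : ∀ A : Finset Θ, mstar A = if x ∈ A then m A + m (A \ {x}) else 0)
    {A : Finset Θ} (hx : x ∈ A) : bel mstar A = bel m A := by
  have hA : A = insert x (A.erase x) := (Finset.insert_erase hx).symm
  rw [hA]
  unfold bel
  rw [Finset.sum_powerset_insert (Finset.notMem_erase x A),
      Finset.sum_powerset_insert (Finset.notMem_erase x A)]
  have hnotin : ∀ t ∈ (A.erase x).powerset, x ∉ t := by
    intro t ht hxt
    exact Finset.notMem_erase x A (Finset.mem_powerset.mp ht hxt)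
  have h1 : ∑ t ∈ (A.erase x).powerset, mstar t = 0 := by
    apply Finset.sum_eq_zero
    intro t ht
    rw [hstar, if_neg (hnotin t ht)]
  have h2 : ∑ t ∈ (A.erase x).powerset, mstar (insert x t)
      = ∑ t ∈ (A.erase x).powerset, (m (insert x t) + m t) := by
    apply Finset.sum_congr rfl
    intro t ht
    rw [hstar, if_pos (Finset.mem_insert_self x t), Finset.sdiff_singleton_eq_erase,
        Finset.erase_insert (hnotin t ht)]
  rw [h1, h2, Finset.sum_add_distrib]
  ring

lemma filter_eq' (x : Θ) :
    (Finset.univ.filter (fun A : Finset Θ => A ≠ ∅ ∧ A ≠ Finset.univ)).filter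
        (fun A => x ∉ A)
      = ({x}ᶜ : Finset Θ).powerset.filter (· ≠ ∅) := by
  ext A
  simp only [Finset.mem_filter, Finset.mem_univ, true_and, Finset.mem_powerset]
  constructor
  · rintro ⟨⟨h1, _⟩, h3⟩
    refine ⟨fun a ha => Finset.mem_compl.mpr ?_, h1⟩
    intro hax
    rw [Finset.mem_singleton] at hax
    exact h3 (hax ▸ ha)
  · rintro ⟨h1, h2⟩
    have hx : x ∉ A := fun hx => by simpa using Finset.mem_compl.mp (h1 hx)
    exact ⟨⟨h2, fun h => hx (h ▸ Finset.mem_univ x)⟩, hx⟩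
end

/-- The partial L2 consistent approximation in the belief space: among
mass functions focused on `x`, the squared L2 distance between belief functions (over
nonempty proper subsets) is minimized, with minimal value `∑_{∅ ⊊ A ⊆ {x}ᶜ} b(A)²`,
uniquely by the focused consistent transformation `m*(A) = m(A) + m(A \ {x})` for
`x ∈ A` (hence the partial L1 and L2 approximations in the belief space coincide). -/
theorem stmt13 [Fintype Θ] [DecidableEq Θ] (hcard : 2 ≤ Fintype.card Θ)
    (m : Finset Θ → ℝ) (hm : IsMass m) (x : Θ)
    (mstar : Finset Θ → ℝ)
    (hstar : ∀ A : Finset Θ, mstar A = if x ∈ A then m A + m (A \ {x}) else 0) :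
    IsMass mstar ∧ Focused mstar x ∧
    (∀ m' : Finset Θ → ℝ, IsMass m' → Focused m' x →
      (∑ A ∈ ({x}ᶜ : Finset Θ).powerset.filter (· ≠ ∅), (bel m A) ^ 2) ≤
        ∑ A ∈ Finset.univ.filter (fun A : Finset Θ => A ≠ ∅ ∧ A ≠ Finset.univ),
          (bel m A - bel m' A) ^ 2) ∧
    (∑ A ∈ Finset.univ.filter (fun A : Finset Θ => A ≠ ∅ ∧ A ≠ Finset.univ),
        (bel m A - bel mstar A) ^ 2) =
      ∑ A ∈ ({x}ᶜ : Finset Θ).powerset.filter (· ≠ ∅), (bel m A) ^ 2 ∧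
    (∀ m' : Finset Θ → ℝ, IsMass m' → Focused m' x →
      (∑ A ∈ Finset.univ.filter (fun A : Finset Θ => A ≠ ∅ ∧ A ≠ Finset.univ),
          (bel m A - bel m' A) ^ 2) =
        (∑ A ∈ ({x}ᶜ : Finset Θ).powerset.filter (· ≠ ∅), (bel m A) ^ 2) →
      m' = mstar) := by
  have hfoc : Focused mstar x := by
    intro A hA
    by_contra hx
    exact hA (by rw [hstar, if_neg hx])
  have hmass : IsMass mstar := by
    refine ⟨by rw [hstar]; simp, fun A => ?_, ?_⟩
    · rw [hstar]
      split
      · exact add_nonneg (hm.2.1 A) (hm.2.1 _)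
      · exact le_refl 0
    · rw [← bel_univ', bel_mstar_eq hstar (Finset.mem_univ x), bel_univ']
      exact hm.2.2
  have hdecomp : ∀ m' : Finset Θ → ℝ, Focused m' x →
      ∑ A ∈ Finset.univ.filter (fun A : Finset Θ => A ≠ ∅ ∧ A ≠ Finset.univ),
          (bel m A - bel m' A) ^ 2
        = (∑ A ∈ (Finset.univ.filter
              (fun A : Finset Θ => A ≠ ∅ ∧ A ≠ Finset.univ)).filter (fun A => x ∈ A),
            (bel m A - bel m' A) ^ 2)
          + ∑ A ∈ ({x}ᶜ : Finset Θ).powerset.filter (· ≠ ∅), (bel m A) ^ 2 := by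
    intro m' hf
    rw [← Finset.sum_filter_add_sum_filter_not
      (Finset.univ.filter (fun A : Finset Θ => A ≠ ∅ ∧ A ≠ Finset.univ)) (fun A => x ∈ A)]
    congr 1
    rw [← filter_eq' x]
    apply Finset.sum_congr rfl
    intro A hA
    rw [bel_zero_of_focused hf (Finset.mem_filter.mp hA).2, sub_zero]
  refine ⟨hmass, hfoc, ?_, ?_, ?_⟩
  · intro m' hm' hf'
    rw [hdecomp m' hf']
    have h0 : (0:ℝ) ≤ ∑ A ∈ (Finset.univ.filter
        (fun A : Finset Θ => A ≠ ∅ ∧ A ≠ Finset.univ)).filter (fun A => x ∈ A),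
        (bel m A - bel m' A) ^ 2 :=
      Finset.sum_nonneg fun A _ => sq_nonneg _
    linarith
  · rw [hdecomp mstar hfoc]
    have h0 : ∑ A ∈ (Finset.univ.filter
        (fun A : Finset Θ => A ≠ ∅ ∧ A ≠ Finset.univ)).filter (fun A => x ∈ A),
        (bel m A - bel mstar A) ^ 2 = 0 := by
      apply Finset.sum_eq_zero
      intro A hA
      rw [bel_mstar_eq hstar (Finset.mem_filter.mp hA).2, sub_self]
      ring
    rw [h0, zero_add]
  · intro m' hm' hf' heq
    rw [hdecomp m' hf'] at heq
    have hzero : ∑ A ∈ (Finset.univ.filter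
        (fun A : Finset Θ => A ≠ ∅ ∧ A ≠ Finset.univ)).filter (fun A => x ∈ A),
        (bel m A - bel m' A) ^ 2 = 0 := by linarith
    have hterm := (Finset.sum_eq_zero_iff_of_nonneg
      (fun A _ => sq_nonneg (bel m A - bel m' A))).mp hzero
    apply mass_ext'
    intro A
    by_cases hx : x ∈ A
    · by_cases hu : A = Finset.univ
      · subst hu
        rw [bel_univ', bel_univ', hm'.2.2, hmass.2.2]
      · have hA : A ∈ (Finset.univ.filter
            (fun A : Finset Θ => A ≠ ∅ ∧ A ≠ Finset.univ)).filter (fun A => x ∈ A) := by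
          simp only [Finset.mem_filter, Finset.mem_univ, true_and]
          exact ⟨⟨Finset.ne_empty_of_mem hx, hu⟩, hx⟩
        have := hterm A hA
        have hb : bel m A - bel m' A = 0 := by
          exact pow_eq_zero_iff (by norm_num) |>.mp this
        rw [bel_mstar_eq hstar hx]
        linarith
    · rw [bel_zero_of_focused hf' hx, bel_zero_of_focused hfoc hx]
end

section
/- Let Θ be a finite set with at least two elements, m a mass function on Θ with belief function b, and x ∈ Θ. Among all mass functions m' on Θ focused on x, with belief function b', the minimum of the L∞ distance max_{∅ ⊊ A ⊊ Θ} |b(A) − b'(A)| equals b(Θ \ {x}); moreover, a mass function m' focused on x attains this minimum if and only if |b(A) − b'(A)| ≤ b(Θ \ {x}) for every A with x ∈ A and A ⊊ Θ. -/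
open Finset

variable {Θ : Type*}

lemma bel_nonneg (m : Finset Θ → ℝ) (hm : ∀ A, 0 ≤ m A) (A : Finset Θ) : 0 ≤ bel m A :=
  Finset.sum_nonneg fun B _ => hm B

lemma bel_mono (m : Finset Θ → ℝ) (hm : ∀ A, 0 ≤ m A) {A C : Finset Θ} (h : A ⊆ C) :
    bel m A ≤ bel m C :=
  Finset.sum_le_sum_of_subset_of_nonneg (Finset.powerset_mono.mpr h) (fun B _ _ => hm B)

lemma bel_focused_zero [DecidableEq Θ] (m' : Finset Θ → ℝ) (x : Θ) (hf : Focused m' x)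
    {A : Finset Θ} (hx : x ∉ A) : bel m' A = 0 := by
  apply Finset.sum_eq_zero
  intro B hB
  by_contra h
  exact hx (Finset.mem_powerset.mp hB (hf B h))

/-- Belief of the focused mass agrees with `bel m` on sets containing `x`. -/
lemma bel_focusMass [DecidableEq Θ] (m : Finset Θ → ℝ) (x : Θ) {A : Finset Θ} (hx : x ∈ A) :
    bel (fun B => if x ∈ B then m B + m (B.erase x) else 0) A = bel m A := by
  unfold bel
  rw [← Finset.sum_filter_add_sum_filter_not A.powerset (fun B => x ∈ B),
      ← Finset.sum_filter_add_sum_filter_not A.powerset (fun B => x ∈ B) m]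
  have h2 : ∑ B ∈ A.powerset.filter (fun B => ¬ x ∈ B),
      (if x ∈ B then m B + m (B.erase x) else 0) = 0 := by
    apply Finset.sum_eq_zero
    intro B hB
    simp only [Finset.mem_filter] at hB
    simp [hB.2]
  rw [h2, add_zero]
  have h1 : ∑ B ∈ A.powerset.filter (fun B => x ∈ B),
      (if x ∈ B then m B + m (B.erase x) else 0)
      = ∑ B ∈ A.powerset.filter (fun B => x ∈ B), (m B + m (B.erase x)) := by
    apply Finset.sum_congr rfl
    intro B hB
    simp only [Finset.mem_filter] at hB
    simp [hB.2]
  rw [h1, Finset.sum_add_distrib]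
  congr 1
  apply Finset.sum_nbij' (fun B => B.erase x) (fun B => insert x B)
  · intro B hB
    simp only [Finset.mem_filter, Finset.mem_powerset] at hB ⊢
    exact ⟨(Finset.erase_subset x B).trans hB.1, Finset.notMem_erase x B⟩
  · intro B hB
    simp only [Finset.mem_filter, Finset.mem_powerset] at hB ⊢
    exact ⟨Finset.insert_subset hx hB.1, Finset.mem_insert_self x B⟩
  · intro B hB
    simp only [Finset.mem_filter] at hB
    exact Finset.insert_erase hB.2
  · intro B hB
    simp only [Finset.mem_filter] at hB
    exact Finset.erase_insert hB.2
  · intro B _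
    rfl

/-- The partial L∞ consistent approximation in the belief space: among
mass functions focused on `x`, the minimal L∞ distance between belief functions (over
nonempty proper subsets) equals `b({x}ᶜ)`, and `m'` attains it iff
`|b(A) − b'(A)| ≤ b({x}ᶜ)` for every `A ∋ x`, `A ≠ Θ`. -/
theorem stmt15 [Fintype Θ] [DecidableEq Θ] (hcard : 2 ≤ Fintype.card Θ)
    (m : Finset Θ → ℝ) (hm : IsMass m) (x : Θ)
    (h2 : (Finset.univ.filter
      (fun A : Finset Θ => A ≠ ∅ ∧ A ≠ Finset.univ)).Nonempty) :
    IsLeast {d : ℝ | ∃ m' : Finset Θ → ℝ, IsMass m' ∧ Focused m' x ∧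
        d = (Finset.univ.filter (fun A : Finset Θ => A ≠ ∅ ∧ A ≠ Finset.univ)).sup' h2
              (fun A => |bel m A - bel m' A|)}
      (bel m ({x}ᶜ : Finset Θ)) ∧
    ∀ m' : Finset Θ → ℝ, IsMass m' → Focused m' x →
      ((Finset.univ.filter (fun A : Finset Θ => A ≠ ∅ ∧ A ≠ Finset.univ)).sup' h2
          (fun A => |bel m A - bel m' A|) = bel m ({x}ᶜ : Finset Θ) ↔
        ∀ A : Finset Θ, x ∈ A → A ≠ Finset.univ →
          |bel m A - bel m' A| ≤ bel m ({x}ᶜ : Finset Θ)) := by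
  obtain ⟨hm0, hmpos, hmsum⟩ := hm
  set K := bel m ({x}ᶜ : Finset Θ) with hK
  -- {x}ᶜ is a nonempty proper subset
  have hxc_ne : ({x}ᶜ : Finset Θ) ≠ ∅ := by
    obtain ⟨y, hy⟩ := Fintype.exists_ne_of_one_lt_card hcard x
    intro h
    have : y ∈ ({x}ᶜ : Finset Θ) := by simp [hy]
    rw [h] at this
    exact absurd this (Finset.notMem_empty y)
  have hxc_nu : ({x}ᶜ : Finset Θ) ≠ Finset.univ := by
    intro h
    have : x ∈ ({x}ᶜ : Finset Θ) := h ▸ Finset.mem_univ x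
    simp at this
  have hxc_mem : ({x}ᶜ : Finset Θ) ∈
      Finset.univ.filter (fun A : Finset Θ => A ≠ ∅ ∧ A ≠ Finset.univ) := by
    simp [hxc_ne, hxc_nu]
  have hxnotin : x ∉ ({x}ᶜ : Finset Θ) := by simp
  -- lower bound: any focused m' gives sup' ≥ K
  have hlow : ∀ m' : Finset Θ → ℝ, Focused m' x →
      K ≤ (Finset.univ.filter (fun A : Finset Θ => A ≠ ∅ ∧ A ≠ Finset.univ)).sup' h2
            (fun A => |bel m A - bel m' A|) := by
    intro m' hf
    have := Finset.le_sup' (fun A => |bel m A - bel m' A|) hxc_mem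
    rwa [bel_focused_zero m' x hf hxnotin, sub_zero,
      abs_of_nonneg (bel_nonneg m hmpos _)] at this
  -- bound for sets not containing x
  have hnotx : ∀ (m' : Finset Θ → ℝ), Focused m' x → ∀ A : Finset Θ, x ∉ A →
      |bel m A - bel m' A| ≤ K := by
    intro m' hf A hxA
    rw [bel_focused_zero m' x hf hxA, sub_zero, abs_of_nonneg (bel_nonneg m hmpos _)]
    exact bel_mono m hmpos (fun y hy => by
      simp only [Finset.mem_compl, Finset.mem_singleton]
      rintro rfl; exact hxA hy)
  -- the iff for arbitrary focused m'
  have hiff : ∀ m' : Finset Θ → ℝ, Focused m' x →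
      ((Finset.univ.filter (fun A : Finset Θ => A ≠ ∅ ∧ A ≠ Finset.univ)).sup' h2
          (fun A => |bel m A - bel m' A|) = K ↔
        ∀ A : Finset Θ, x ∈ A → A ≠ Finset.univ → |bel m A - bel m' A| ≤ K) := by
    intro m' hf
    constructor
    · intro hsup A hxA hAu
      have hAmem : A ∈ Finset.univ.filter
          (fun A : Finset Θ => A ≠ ∅ ∧ A ≠ Finset.univ) := by
        refine Finset.mem_filter.mpr ⟨Finset.mem_univ _, ?_, hAu⟩
        exact Finset.ne_empty_of_mem hxA
      calc |bel m A - bel m' A| ≤ _ := Finset.le_sup' (fun A => |bel m A - bel m' A|) hAmem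
        _ = K := hsup
    · intro hb
      refine le_antisymm ?_ (hlow m' hf)
      apply Finset.sup'_le
      intro A hA
      by_cases hxA : x ∈ A
      · exact hb A hxA (Finset.mem_filter.mp hA).2.2
      · exact hnotx m' hf A hxA
  -- the optimal focused approximation
  set m₀ : Finset Θ → ℝ := fun B => if x ∈ B then m B + m (B.erase x) else 0 with hm₀
  have hm₀pos : ∀ A, 0 ≤ m₀ A := by
    intro A
    simp only [hm₀]
    split
    · exact add_nonneg (hmpos _) (hmpos _)
    · exact le_refl 0
  have hm₀mass : IsMass m₀ := by
    refine ⟨by simp [hm₀], hm₀pos, ?_⟩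
    have huniv : ∑ A : Finset Θ, m₀ A = bel m₀ Finset.univ := by
      rw [bel, Finset.powerset_univ]
    rw [huniv, bel_focusMass m x (Finset.mem_univ x), bel, Finset.powerset_univ]
    exact hmsum
  have hm₀f : Focused m₀ x := by
    intro A hA
    by_contra h
    simp [hm₀, h] at hA
  have hm₀sup : (Finset.univ.filter (fun A : Finset Θ => A ≠ ∅ ∧ A ≠ Finset.univ)).sup' h2
      (fun A => |bel m A - bel m₀ A|) = K := by
    apply (hiff m₀ hm₀f).mpr
    intro A hxA _
    rw [bel_focusMass m x hxA, sub_self, abs_zero]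
    exact bel_nonneg m hmpos _
  refine ⟨⟨⟨m₀, hm₀mass, hm₀f, hm₀sup.symm⟩, ?_⟩, fun m' _ hf => hiff m' hf⟩
  rintro d ⟨m', _, hf, rfl⟩
  exact hlow m' hf
end
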